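/- Let $\mathfrak{p}\subseteq\mathfrak{g}$ be a parabolic subalgebra of a complex semisimple Lie algebra, with nilpotent radical $\mathfrak{u}$ and chosen Levi factor $\mathfrak{l}$, and let $x\in\mathfrak{p}$ satisfy $\mathfrak{g}_x\cap\mathfrak{u}=\{0\}$, where $\mathfrak{g}_x$ denotes the centralizer of $x$ in $\mathfrak{g}$. Write $x=x_{\mathfrak{l}}+x_{\mathfrak{u}}$ with $x_{\mathfrak{l}}\in\mathfrak{l}$ and $x_{\mathfrak{u}}\in\mathfrak{u}$. Then $x+\mathfrak{u}=x_{\mathfrak{l}}+\mathfrak{u}=Ux$ is a single orbit of the unipotent group $U=\exp(\mathfrak{u})$. -/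

import Mathlib

/-! The map `y ↦ exp (ad y) x` from `𝔲` to `x + 𝔲` is onto by successive approximation along the
lower central series `𝔲 = 𝔲⁰ ⊇ 𝔲¹ ⊇ ⋯ ⊇ 𝔲ᴺ = 0`. Replacing `y` by `y + c` with `c ∈ 𝔲ᵏ` changes
`exp (ad y) x` by `⁅c, x⁆` modulo `𝔲ᵏ⁺¹`. Since `ad x` preserves each `𝔲ᵏ` and is injective on
`𝔲`, it maps `𝔲ᵏ` onto itself, so an error lying in `𝔲ᵏ` can be pushed into `𝔲ᵏ⁺¹`. -/

open Module

namespace MF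

section ModuleDefs

variable (V : Type) [AddCommGroup V] [Module ℂ V]

/-- A complex-valued polynomial function on a finite-dimensional complex vector space. -/
def IsPolyFun (f : V → ℂ) : Prop :=
  ∃ (n : ℕ) (b : Basis (Fin n) ℂ V) (p : MvPolynomial (Fin n) ℂ),
    ∀ x, f x = MvPolynomial.eval (fun i => b.repr x i) p

/-- An algebraic subset: the common zero locus of a family of polynomial functions. -/
def IsAlgebraicSet (S : Set V) : Prop :=
  ∃ T : Set (V → ℂ), (∀ f ∈ T, IsPolyFun V f) ∧ S = {x | ∀ f ∈ T, f x = 0}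

/-- An irreducible algebraic subset. -/
def IsIrreducibleAlg (S : Set V) : Prop :=
  IsAlgebraicSet V S ∧ S.Nonempty ∧
    ∀ A B : Set V, IsAlgebraicSet V A → IsAlgebraicSet V B → S ⊆ A ∪ B → S ⊆ A ∨ S ⊆ B

/-- An irreducible component of `W`: a maximal irreducible algebraic subset of `W`. -/
def IsIrrComponentOf (W S : Set V) : Prop :=
  IsIrreducibleAlg V S ∧ S ⊆ W ∧
    ∀ T : Set V, IsIrreducibleAlg V T → T ⊆ W → S ⊆ T → S = T

/-- Zariski closure. -/
def algClosure (S : Set V) : Set V := ⋂₀ {T : Set V | IsAlgebraicSet V T ∧ S ⊆ T}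

/-- Dimension of an algebraic set, via chains of irreducible algebraic subsets. -/
noncomputable def algDim (S : Set V) : WithBot ℕ∞ :=
  Order.krullDim {T : Set V // IsIrreducibleAlg V T ∧ T ⊆ S}

/-- Local dimension of an algebraic set at a point. -/
noncomputable def algDimAt (S : Set V) (x : V) : WithBot ℕ∞ :=
  Order.krullDim {T : Set V // IsIrreducibleAlg V T ∧ T ⊆ S ∧ x ∈ T}

/-- The (embedded Zariski) tangent space dimension of `W` at `p`. -/
noncomputable def tangentDim (W : Set V) (p : V) : ℕ :=
  Module.finrank ℂ (Submodule.span ℂ {v : V | ∀ f : V → ℂ, IsPolyFun V f →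
    (∀ q ∈ W, f q = 0) → deriv (fun t : ℂ => f (p + t • v)) 0 = 0})

/-- A singular point of the algebraic set `W`: a point of `W` at which the Zariski tangent
space dimension differs from the local dimension. -/
def IsSingularPointOf (W : Set V) (p : V) : Prop :=
  p ∈ W ∧ ((tangentDim V W p : ℕ∞) : WithBot ℕ∞) ≠ algDimAt V W p

end ModuleDefs

section LieDefs

variable (L : Type) [LieRing L] [LieAlgebra ℂ L]

/-- Truncated exponential of an endomorphism; agrees with `exp` on nilpotent endomorphisms. -/
noncomputable def expNil (g : Module.End ℂ L) : Module.End ℂ L :=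
  ∑ k ∈ Finset.range (Module.finrank ℂ L + 1), ((k.factorial : ℂ))⁻¹ • g ^ k

/-- Invariance under the adjoint group (which is generated by the exponentials of the
nilpotent inner derivations). -/
def AdInvariant (f : L → ℂ) : Prop :=
  ∀ y : L, IsNilpotent (LieAlgebra.ad ℂ L y) →
    ∀ x, f (expNil L (LieAlgebra.ad ℂ L y) x) = f x

/-- A regular element: one whose centralizer has minimal dimension. -/
def IsRegularElt (x : L) : Prop :=
  ∀ y : L, finrank ℂ (LinearMap.ker (LieAlgebra.ad ℂ L x)) ≤
    finrank ℂ (LinearMap.ker (LieAlgebra.ad ℂ L y))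

/-- A Borel subalgebra: a maximal solvable subalgebra. -/
def IsBorel (b : LieSubalgebra ℂ L) : Prop :=
  LieAlgebra.IsSolvable b ∧
    ∀ c : LieSubalgebra ℂ L, LieAlgebra.IsSolvable c → b ≤ c → b = c

/-- A parabolic subalgebra: one containing a Borel subalgebra. -/
def IsParabolic (p : LieSubalgebra ℂ L) : Prop :=
  ∃ b : LieSubalgebra ℂ L, IsBorel L b ∧ b ≤ p

/-- `u` is the nilpotent radical (the largest nilpotent ideal) of `p`. -/
def IsNilradicalOf (p u : LieSubalgebra ℂ L) : Prop :=
  u ≤ p ∧ (∀ x ∈ p, ∀ y ∈ u, ⁅x, y⁆ ∈ u) ∧ LieRing.IsNilpotent u ∧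
    ∀ v : LieSubalgebra ℂ L, v ≤ p → (∀ x ∈ p, ∀ y ∈ v, ⁅x, y⁆ ∈ v) →
      LieRing.IsNilpotent v → v ≤ u

/-- `l` is a Levi factor of the parabolic `p` with nilpotent radical `u`, i.e.
`p = l ⊕ u` as vector spaces, with `l` a subalgebra. -/
def IsLeviFactorOf (p u l : LieSubalgebra ℂ L) : Prop :=
  l ≤ p ∧ l ⊓ u = ⊥ ∧ ∀ x ∈ p, ∃ y ∈ l, ∃ z ∈ u, x = y + z

/-- The intersection of all Borel subalgebras containing `a` (as a subset of `L`). -/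
def borelIntersection (a : L) : Set L :=
  ⋂₀ {S : Set L | ∃ b : LieSubalgebra ℂ L, IsBorel L b ∧ a ∈ b ∧ S = ↑b}

/-- The centralizer of an element, as a Lie subalgebra. -/
def zentralizer (s : L) : LieSubalgebra ℂ L where
  carrier := {y | ⁅s, y⁆ = 0}
  add_mem' := by intro a b ha hb; simp only [Set.mem_setOf_eq] at *; rw [lie_add, ha, hb, add_zero]
  zero_mem' := by simp
  smul_mem' := by intro c y hy; simp only [Set.mem_setOf_eq] at *; rw [lie_smul, hy, smul_zero]
  lie_mem' := by
    intro a b ha hb; simp only [Set.mem_setOf_eq] at *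
    rw [leibniz_lie, ha, hb, zero_lie, lie_zero, add_zero]

end LieDefs

section Orbits

variable {L : Type} [LieRing L] [LieAlgebra ℂ L]

/-- The adjoint group, realized as products of exponentials of nilpotent inner derivations. -/
def InnerEnd (L : Type) [LieRing L] [LieAlgebra ℂ L] : Set (Module.End ℂ L) :=
  {φ | ∃ l : List L, (∀ y ∈ l, IsNilpotent (LieAlgebra.ad ℂ L y)) ∧
        φ = (l.map fun y => expNil L (LieAlgebra.ad ℂ L y)).prod}

/-- The adjoint orbit of `x`. -/
def adjointOrbit (x : L) : Set L := {y | ∃ φ ∈ InnerEnd L, y = φ x}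

end Orbits

section MFMap

variable (L : Type) [LieRing L] [LieAlgebra ℂ L]

/-- A system of homogeneous, algebraically independent generators of the algebra of
invariant polynomial functions. -/
structure InvGens where
  r : ℕ
  d : Fin r → ℕ
  f : Fin r → L → ℂ
  poly : ∀ i, IsPolyFun L (f i)
  invariant : ∀ i, AdInvariant L (f i)
  homog : ∀ i (c : ℂ) x, f i (c • x) = c ^ d i * f i x
  generates : ∀ g, IsPolyFun L g → AdInvariant L g →
      ∃ p : MvPolynomial (Fin r) ℂ, ∀ x, g x = MvPolynomial.eval (fun i => f i x) p
  indep : ∀ p : MvPolynomial (Fin r) ℂ,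
      (∀ x, MvPolynomial.eval (fun i => f i x) p = 0) → p = 0

/-- The data of the Mishchenko–Fomenko map associated with `a`: the coefficients `F i j`
of the expansion of `fᵢ(x + λ a)` in powers of `λ`. -/
structure MFData (a : L) extends InvGens L where
  F : Fin r → ℕ → L → ℂ
  expansion : ∀ i x (lam : ℂ),
    f i (x + lam • a) = f i a * lam ^ d i + ∑ j ∈ Finset.range (d i), F i j x * lam ^ j

variable {L}

/-- Index type for the components of the Mishchenko–Fomenko map. -/
abbrev MFData.B {a : L} (Φ : MFData L a) : Type := (i : Fin Φ.r) × Fin (Φ.d i)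

/-- The Mishchenko–Fomenko map. -/
def MFData.map {a : L} (Φ : MFData L a) (x : L) : Φ.B → ℂ := fun ij => Φ.F ij.1 ij.2 x

/-- Fibre of the Mishchenko–Fomenko map through `x`. -/
def MFData.fiber {a : L} (Φ : MFData L a) (x : L) : Set L := {y | Φ.map y = Φ.map x}

end MFMap

end MF

/-- Orbit of the unipotent group `U = exp 𝔲`. -/
def Uorbit {L : Type} [LieRing L] [LieAlgebra ℂ L] (u : LieSubalgebra ℂ L) (x : L) :
    Set L :=
  {z | ∃ y ∈ u, z = MF.expNil L (LieAlgebra.ad ℂ L y) x}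

namespace LieSubalgebra

open LieAlgebra

section Filtration

variable {R L : Type*} [CommRing R] [LieRing L] [LieAlgebra R L] (u : LieSubalgebra R L)

theorem lie_mem_toLieSubmodule_lcs_succ {k : ℕ} {a b : L} (ha : a ∈ u)
    (hb : b ∈ u.toLieSubmodule.lcs k) : ⁅a, b⁆ ∈ u.toLieSubmodule.lcs (k + 1) := by
  rw [LieSubmodule.lcs_succ]
  exact LieSubmodule.lie_mem_lie (x := (⟨a, ha⟩ : u)) (LieSubmodule.mem_top _) hb

theorem toLieSubmodule_lcs_succ_le (k : ℕ) :
    u.toLieSubmodule.lcs (k + 1) ≤ u.toLieSubmodule.lcs k := by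
  rw [LieSubmodule.lcs_succ]
  exact LieSubmodule.lie_le_right _ _

theorem mem_of_mem_toLieSubmodule_lcs {k : ℕ} {b : L} (hb : b ∈ u.toLieSubmodule.lcs k) : b ∈ u :=
  u.toLieSubmodule.lcs_le_self k hb

theorem exists_toLieSubmodule_lcs_eq_bot [LieRing.IsNilpotent u] :
    ∃ k, u.toLieSubmodule.lcs k = ⊥ :=
  u.toLieSubmodule.isNilpotent_iff_exists_lcs_eq_bot.mp ‹_›

variable {u}

/-- `ad x` restricts to a derivation of `u`, and derivations preserve the lower central series. -/
theorem lie_mem_toLieSubmodule_lcs {x : L} (hx : ∀ a ∈ u, ⁅x, a⁆ ∈ u) :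
    ∀ k, ∀ b ∈ u.toLieSubmodule.lcs k, ⁅x, b⁆ ∈ u.toLieSubmodule.lcs k
  | 0, b, hb => hx b hb
  | k + 1, b, hb => by
    rw [LieSubmodule.lcs_succ, ← LieSubmodule.mem_toSubmodule,
      LieSubmodule.lieIdeal_oper_eq_linear_span'] at hb
    induction hb using Submodule.span_induction with
    | mem z hz =>
      obtain ⟨⟨a, ha⟩, -, w, hw, rfl⟩ := hz
      rw [LieSubalgebra.coe_bracket_of_module, leibniz_lie]
      exact add_mem (u.lie_mem_toLieSubmodule_lcs_succ (hx a ha) hw)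
        (u.lie_mem_toLieSubmodule_lcs_succ ha (lie_mem_toLieSubmodule_lcs hx k w hw))
    | zero => simp
    | add w₁ w₂ _ _ ih₁ ih₂ => rw [lie_add]; exact add_mem ih₁ ih₂
    | smul c w _ ih => rw [lie_smul]; exact SMulMemClass.smul_mem c ih

theorem ad_pow_succ_apply_mem {x y : L} (hx : ∀ a ∈ u, ⁅x, a⁆ ∈ u) (hy : y ∈ u) :
    ∀ m : ℕ, (ad R L y ^ (m + 1)) x ∈ u
  | 0 => by
    rw [pow_one, ad_apply, ← lie_skew]
    exact u.neg_mem (hx y hy)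
  | m + 1 => by
    rw [pow_succ', Module.End.mul_apply, ad_apply]
    exact u.lie_mem hy (ad_pow_succ_apply_mem hx hy m)

theorem ad_add_pow_succ_apply_sub (x y c : L) (m : ℕ) :
    (ad R L (y + c) ^ (m + 1)) x - (ad R L y ^ (m + 1)) x =
      ⁅y + c, (ad R L (y + c) ^ m) x - (ad R L y ^ m) x⁆ + ⁅c, (ad R L y ^ m) x⁆ := by
  simp only [pow_succ', Module.End.mul_apply, ad_apply, lie_sub, add_lie]
  abel

/-- Perturbing `y ∈ u` by `c ∈ lcs k` changes `(ad y)^m x` only modulo `lcs (k + 1)` once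
`m ≥ 2`: each term of the difference brackets `c` with an element of `u` at least once more. -/
theorem ad_add_pow_add_two_apply_sub_mem {x y c : L} (hx : ∀ a ∈ u, ⁅x, a⁆ ∈ u) (hy : y ∈ u)
    {k : ℕ} (hc : c ∈ u.toLieSubmodule.lcs k) (m : ℕ) :
    (ad R L (y + c) ^ (m + 2)) x - (ad R L y ^ (m + 2)) x ∈ u.toLieSubmodule.lcs (k + 1) := by
  have hyc : y + c ∈ u := u.add_mem hy (u.mem_of_mem_toLieSubmodule_lcs hc)
  have hD : (ad R L (y + c) ^ (m + 1)) x - (ad R L y ^ (m + 1)) x ∈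
      u.toLieSubmodule.lcs k := by
    cases m with
    | zero =>
      simp only [ad_add_pow_succ_apply_sub, pow_zero, Module.End.one_apply, sub_self, lie_zero,
        zero_add, ← lie_skew c x]
      exact neg_mem (lie_mem_toLieSubmodule_lcs hx k c hc)
    | succ m => exact u.toLieSubmodule_lcs_succ_le k (ad_add_pow_add_two_apply_sub_mem hx hy hc m)
  rw [ad_add_pow_succ_apply_sub, ← lie_skew c]
  exact add_mem (u.lie_mem_toLieSubmodule_lcs_succ hyc hD)
    (neg_mem (u.lie_mem_toLieSubmodule_lcs_succ (ad_pow_succ_apply_mem hx hy m) hc))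

end Filtration

variable {K L : Type*} [Field K] [LieRing L] [LieAlgebra K L] [FiniteDimensional K L]
  {u : LieSubalgebra K L}

/-- `ad x` is injective on the finite-dimensional space `lcs k`, hence onto. -/
theorem exists_lie_eq_of_mem_toLieSubmodule_lcs {x : L} (hx : ∀ a ∈ u, ⁅x, a⁆ ∈ u)
    (hinj : ∀ a ∈ u, ⁅x, a⁆ = 0 → a = 0) {k : ℕ} {e : L} (he : e ∈ u.toLieSubmodule.lcs k) :
    ∃ c ∈ u.toLieSubmodule.lcs k, ⁅x, c⁆ = e := by
  let N : Submodule K L := u.toLieSubmodule.lcs k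
  let f : N →ₗ[K] N := (ad K L x).restrict (lie_mem_toLieSubmodule_lcs hx k)
  have hf : Function.Injective f := fun a b hab => Subtype.ext <| sub_eq_zero.mp <|
    hinj _ (u.mem_of_mem_toLieSubmodule_lcs (sub_mem a.2 b.2))
      (by rw [lie_sub, sub_eq_zero]; exact congrArg Subtype.val hab)
  obtain ⟨c, hc⟩ := LinearMap.injective_iff_surjective.mp hf ⟨e, he⟩
  exact ⟨c, c.2, congrArg Subtype.val hc⟩

end LieSubalgebra

namespace MF

variable {L : Type} [LieRing L] [LieAlgebra ℂ L]

theorem expNil_apply (g : Module.End ℂ L) (z : L) :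
    expNil L g z = ∑ m ∈ Finset.range (finrank ℂ L + 1), (m.factorial : ℂ)⁻¹ • (g ^ m) z := by
  simp [expNil, LinearMap.sum_apply]

theorem expNil_zero : expNil L 0 = 1 := by
  simp [expNil, Finset.sum_range_succ']

end MF

namespace LieSubalgebra

open LieAlgebra

variable {L : Type} [LieRing L] [LieAlgebra ℂ L] {u : LieSubalgebra ℂ L} {x : L}

theorem expNil_ad_apply_sub_mem (hx : ∀ a ∈ u, ⁅x, a⁆ ∈ u) {y : L} (hy : y ∈ u) :
    MF.expNil L (ad ℂ L y) x - x ∈ u := by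
  rw [MF.expNil_apply, Finset.sum_range_succ']
  simpa using sum_mem fun m _ => u.smul_mem _ (ad_pow_succ_apply_mem hx hy m)

theorem expNil_ad_add_apply_sub_sub_mem [Nontrivial L] [Module.Finite ℂ L]
    (hx : ∀ a ∈ u, ⁅x, a⁆ ∈ u) {y c : L} (hy : y ∈ u) {k : ℕ}
    (hc : c ∈ u.toLieSubmodule.lcs k) :
    MF.expNil L (ad ℂ L (y + c)) x - MF.expNil L (ad ℂ L y) x - ⁅c, x⁆ ∈
      u.toLieSubmodule.lcs (k + 1) := by
  obtain ⟨n, hn⟩ := Nat.exists_eq_succ_of_ne_zero (Module.finrank_pos (R := ℂ) (M := L)).ne'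
  rw [MF.expNil_apply, MF.expNil_apply, ← Finset.sum_sub_distrib, hn, Finset.sum_range_succ',
    Finset.sum_range_succ']
  simp only [← smul_sub, pow_zero, sub_self, add_zero, zero_add, pow_one, ad_apply,
    add_lie, add_sub_cancel_left, Nat.factorial_one, Nat.cast_one, inv_one, one_smul,
    add_sub_cancel_right]
  exact sum_mem fun m _ => SMulMemClass.smul_mem _ (ad_add_pow_add_two_apply_sub_mem hx hy hc m)

theorem exists_expNil_ad_apply_sub_mem [Nontrivial L] [Module.Finite ℂ L]
    (hx : ∀ a ∈ u, ⁅x, a⁆ ∈ u) (hinj : ∀ a ∈ u, ⁅x, a⁆ = 0 → a = 0) {v : L} (hv : v ∈ u) :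
    ∀ k, ∃ y ∈ u, MF.expNil L (ad ℂ L y) x - (x + v) ∈ u.toLieSubmodule.lcs k
  | 0 => ⟨0, u.zero_mem, by simpa [MF.expNil_zero] using neg_mem hv⟩
  | k + 1 => by
    obtain ⟨y, hy, he⟩ := exists_expNil_ad_apply_sub_mem hx hinj hv k
    obtain ⟨c, hc, hxc⟩ := exists_lie_eq_of_mem_toLieSubmodule_lcs hx hinj he
    refine ⟨y + c, u.add_mem hy (u.mem_of_mem_toLieSubmodule_lcs hc), ?_⟩
    have := expNil_ad_add_apply_sub_sub_mem hx hy hc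
    rwa [← lie_skew, hxc, sub_neg_eq_add, sub_add_sub_cancel] at this

theorem coset_eq_Uorbit [Module.Finite ℂ L] [LieRing.IsNilpotent u]
    (hx : ∀ a ∈ u, ⁅x, a⁆ ∈ u) (hinj : ∀ a ∈ u, ⁅x, a⁆ = 0 → a = 0) :
    {z | ∃ v ∈ u, z = x + v} = Uorbit u x := by
  ext z
  constructor
  · rintro ⟨v, hv, rfl⟩
    cases subsingleton_or_nontrivial L
    · exact ⟨0, u.zero_mem, Subsingleton.elim _ _⟩
    obtain ⟨k, hk⟩ := u.exists_toLieSubmodule_lcs_eq_bot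
    obtain ⟨y, hy, hxy⟩ := exists_expNil_ad_apply_sub_mem hx hinj hv k
    rw [hk, LieSubmodule.mem_bot, sub_eq_zero] at hxy
    exact ⟨y, hy, hxy.symm⟩
  · rintro ⟨y, hy, rfl⟩
    exact ⟨_, expNil_ad_apply_sub_mem hx hy, (add_sub_cancel x _).symm⟩

end LieSubalgebra

theorem statement1_general (L : Type) [LieRing L] [LieAlgebra ℂ L] [Module.Finite ℂ L]
    (p u : LieSubalgebra ℂ L) (hu : MF.IsNilradicalOf L p u) (x : L) (hx : x ∈ p)
    (hcent : ∀ y : L, y ∈ u → ⁅x, y⁆ = 0 → y = 0)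
    (xl xu : L) (hxu : xu ∈ u) (hsum : x = xl + xu) :
    {z | ∃ v ∈ u, z = x + v} = {z | ∃ v ∈ u, z = xl + v} ∧
      {z | ∃ v ∈ u, z = x + v} = Uorbit u x := by
  obtain ⟨-, hpu, hnil, -⟩ := hu
  refine ⟨?_, u.coset_eq_Uorbit (fun a ha => hpu x hx a ha) hcent⟩
  ext z
  constructor
  · rintro ⟨v, hv, rfl⟩
    exact ⟨xu + v, u.add_mem hxu hv, by rw [hsum, add_assoc]⟩
  · rintro ⟨v, hv, rfl⟩
    exact ⟨v - xu, u.sub_mem hv hxu, by rw [hsum, add_add_sub_cancel]⟩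

theorem statement1 (L : Type) [LieRing L] [LieAlgebra ℂ L] [Module.Finite ℂ L]
    [LieAlgebra.IsSemisimple ℂ L]
    (p u l : LieSubalgebra ℂ L) (hp : MF.IsParabolic L p)
    (hu : MF.IsNilradicalOf L p u) (hl : MF.IsLeviFactorOf L p u l)
    (x : L) (hx : x ∈ p)
    (hcent : ∀ y : L, y ∈ u → ⁅x, y⁆ = 0 → y = 0)
    (xl xu : L) (hxl : xl ∈ l) (hxu : xu ∈ u) (hsum : x = xl + xu) :
    {z | ∃ v ∈ u, z = x + v} = {z | ∃ v ∈ u, z = xl + v} ∧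
      {z | ∃ v ∈ u, z = x + v} = Uorbit u x :=
  statement1_general L p u hu x hx hcent xl xu hxu hsum
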